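/- Let g be a Lorentzian symmetric bilinear form on a real 4-dimensional vector space V, v a timelike vector, and h the induced positive definite form h(x,y) = -λ_x λ_y g(v,v) + g(w_x,w_y). Then v is an eigenvector with negative eigenvalue (namely -1 after normalizing g(v,v) = -h(v,v)) of the h-self-adjoint operator A defined by h(Ax,y) = g(x,y); thus the two constructions of Theorem 3 (separation → metric and metric → separation) are mutually inverse up to scaling. -/

import Mathlib

/-!
Write `x = λ_x v + w_x` with `w_x ⊥_g v`. Testing `h(A v, ·) = g(v, ·)` against `v` gives
`λ_{Av} = -1`, and testing it against `w_{Av}` shows that `w_{Av}` is `g`-null. A null vector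
orthogonal to a timelike one vanishes: in a Lorentz basis this is the reverse Cauchy–Schwarz
inequality. Hence `A v = -v`.
-/

open Finset

theorem eq_zero_of_sum_mul_eq_mul_of_sum_sq_lt {ι : Type*} (s : Finset ι) {a b : ℝ} {f k : ι → ℝ}
    (hf : ∑ i ∈ s, f i ^ 2 < a ^ 2) (hk : ∑ i ∈ s, k i ^ 2 = b ^ 2)
    (hfk : ∑ i ∈ s, f i * k i = a * b) : b = 0 := by
  have hcs := sum_mul_sq_le_sq_mul_sq s f k
  rw [hk, hfk] at hcs
  have : (a ^ 2 - ∑ i ∈ s, f i ^ 2) * b ^ 2 ≤ 0 := by nlinarith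
  exact pow_eq_zero_iff two_ne_zero |>.mp <|
    le_antisymm ((mul_nonpos_iff_pos_imp_nonpos.mp this).1 (by linarith)) (sq_nonneg b)

namespace LinearMap.BilinForm

section Lorentz

variable {V : Type*} [AddCommGroup V] [Module ℝ V] {n : ℕ} (g : LinearMap.BilinForm ℝ V)

theorem apply_eq_of_lorentz_basis (e : Module.Basis (Fin (n + 1)) ℝ V)
    (he : ∀ i j, g (e i) (e j) = if i = j then (if i = 0 then -1 else 1) else 0) (x y : V) :
    g x y = -(e.repr x 0 * e.repr y 0) + ∑ i : Fin n, e.repr x i.succ * e.repr y i.succ := by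
  rw [← LinearMap.sum_repr_mul_repr_mul e e]
  simp [Finsupp.sum_fintype, he, Fin.sum_univ_succ, Fin.succ_ne_zero]

theorem eq_zero_of_isotropic_of_orthogonal_timelike
    (hsig : ∃ e : Module.Basis (Fin (n + 1)) ℝ V,
      ∀ i j, g (e i) (e j) = if i = j then (if i = 0 then -1 else 1) else 0)
    {v c : V} (hv : g v v < 0) (hvc : g v c = 0) (hc : g c c = 0) : c = 0 := by
  obtain ⟨e, he⟩ := hsig
  simp only [g.apply_eq_of_lorentz_basis e he, ← sq] at hv hvc hc
  have hc₀ : e.repr c 0 = 0 :=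
    eq_zero_of_sum_mul_eq_mul_of_sum_sq_lt univ (a := e.repr v 0)
      (f := fun i : Fin n ↦ e.repr v i.succ) (by linarith) (by linarith) (by linarith)
  have hc_succ : ∀ i : Fin n, e.repr c i.succ = 0 := by
    rw [hc₀, sq, mul_zero, neg_zero, zero_add,
      sum_eq_zero_iff_of_nonneg fun i _ ↦ sq_nonneg _] at hc
    exact fun i ↦ pow_eq_zero_iff two_ne_zero |>.mp (hc i (mem_univ i))
  exact e.forall_coord_eq_zero_iff.mp (Fin.cases hc₀ hc_succ)

end Lorentz

def IsOrthDecomp {K V : Type*} [Field K] [AddCommGroup V] [Module K V]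
    (g : LinearMap.BilinForm K V) (v : V) (lam : V → K) (wp : V → V) : Prop :=
  ∀ x, x = lam x • v + wp x ∧ g v (wp x) = 0

namespace IsOrthDecomp

variable {K V : Type*} [Field K] [AddCommGroup V] [Module K V] {g : LinearMap.BilinForm K V}
  {v : V} {lam : V → K} {wp : V → V} (hd : IsOrthDecomp g v lam wp)
include hd

theorem apply_eq_coeff_mul (x : V) : g v x = lam x * g v v := by
  conv_lhs => rw [(hd x).1]
  rw [map_add, map_smul, (hd x).2, add_zero, smul_eq_mul]

theorem coeff_self (hv : g v v ≠ 0) : lam v = 1 :=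
  mul_right_cancel₀ hv (by rw [← hd.apply_eq_coeff_mul, one_mul])

theorem component_self (hv : g v v ≠ 0) : wp v = 0 := by
  have h := (hd v).1
  rwa [hd.coeff_self hv, one_smul, left_eq_add] at h

theorem coeff_eq_zero_of_orthogonal (hv : g v v ≠ 0) {x : V} (hx : g v x = 0) : lam x = 0 :=
  (mul_eq_zero.mp (hd.apply_eq_coeff_mul x ▸ hx)).resolve_right hv

theorem component_eq_self_of_orthogonal (hv : g v v ≠ 0) {x : V} (hx : g v x = 0) :
    wp x = x := by
  have h := (hd x).1
  rw [hd.coeff_eq_zero_of_orthogonal hv hx, zero_smul, zero_add] at h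
  exact h.symm

end IsOrthDecomp

end LinearMap.BilinForm

open LinearMap.BilinForm in
theorem constructions_mutually_inverse_general
    {V : Type*} [AddCommGroup V] [Module ℝ V]
    (g : LinearMap.BilinForm ℝ V)
    (hsig : ∃ e : Module.Basis (Fin 4) ℝ V, ∀ i j, g (e i) (e j) = if i = j then (if i = (0 : Fin 4) then -1 else 1) else 0)
    (v : V) (hv : g v v < 0)
    (lam : V → ℝ) (wp : V → V)
    (hdec : ∀ x : V, x = lam x • v + wp x ∧ g v (wp x) = 0)
    (h : V → V → ℝ)
    (hdef : ∀ x y, h x y = -(lam x * lam y) * g v v + g (wp x) (wp y))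
    (A : V →ₗ[ℝ] V)
    (hA : ∀ x y : V, h (A x) y = g x y) :
    A v = (-1 : ℝ) • v := by
  have hd : IsOrthDecomp g v lam wp := hdec
  have hvv : g v v ≠ 0 := hv.ne
  have hlam : lam (A v) = -1 := by
    have hAvv := hA v v
    rw [hdef, hd.coeff_self hvv, hd.component_self hvv, map_zero] at hAvv
    exact mul_right_cancel₀ hvv (by linarith)
  set c := wp (A v)
  have hvc : g v c = 0 := (hdec (A v)).2
  have hc : g c c = 0 := by
    have hAvc := hA v c
    rwa [hdef, hd.coeff_eq_zero_of_orthogonal hvv hvc, hd.component_eq_self_of_orthogonal hvv hvc,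
      mul_zero, neg_zero, zero_mul, zero_add, hvc] at hAvc
  calc A v = lam (A v) • v + c := (hdec (A v)).1
    _ = (-1 : ℝ) • v := by
      rw [hlam, g.eq_zero_of_isotropic_of_orthogonal_timelike hsig hv hvc hc, add_zero]

/-- v is an eigenvector with eigenvalue -1 of the operator A representing
g with respect to the induced metric h; the two constructions are mutually inverse. -/
theorem constructions_mutually_inverse
    {V : Type*} [AddCommGroup V] [Module ℝ V]
    (g : LinearMap.BilinForm ℝ V)
    (hsymm : ∀ x y, g x y = g y x)
    (hsig : ∃ e : Module.Basis (Fin 4) ℝ V, ∀ i j, g (e i) (e j) = if i = j then (if i = (0 : Fin 4) then -1 else 1) else 0)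
    (v : V) (hv : g v v < 0)
    (lam : V → ℝ) (wp : V → V)
    (hdec : ∀ x : V, x = lam x • v + wp x ∧ g v (wp x) = 0)
    (h : V → V → ℝ)
    (hdef : ∀ x y, h x y = -(lam x * lam y) * g v v + g (wp x) (wp y))
    (A : V →ₗ[ℝ] V)
    (hA : ∀ x y : V, h (A x) y = g x y) :
    A v = (-1 : ℝ) • v :=
  constructions_mutually_inverse_general g hsig v hv lam wp hdec h hdef A hA
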